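/- Let n ≥ 2 and let 1 ≤ r ≤ n−1. Then Σ_{σ ∈ S_n} (fix(σ) − 1)^{r+1} = n! · Σ_{s=1}^{r} (−1)^{r−s} C(r,s) · ( Σ_{i=1}^{s} i · S(s,i) ), where C(r,s) is the binomial coefficient. Representation-theoretically, this says the multiplicity of the standard irreducible representation S^{(n−1,1)} of S_n in the r-th tensor power of itself equals Σ_{s=1}^{r} (−1)^{r−s} C(r,s) Σ_{i=1}^{s} i S(s,i). -/

import Mathlib

/-!
Write `B k = ∑ᵢ S(k, i)` for the Bell numbers and `x^{(i)}` for falling factorials. The number of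
`i`-tuples of distinct fixed points of `σ` is `fix(σ)^{(i)}`, so by Burnside's lemma for the
transitive action of `Sₙ` on the injections `Fin i ↪ Fin n` (nonempty as `i ≤ n`) these numbers
sum to `n!` over `σ ∈ Sₙ`. Since `x ^ k = ∑ᵢ S(k, i) x^{(i)}`, it follows that
`∑_σ fix(σ) ^ k = n! B k` for `k ≤ n`. Expanding `(fix σ - 1) ^ (r + 1)` binomially turns the left
side into `n!` times the `(r + 1)`-st forward difference of `B` at `0`, which is the `r`-th forward
difference of `s ↦ B (s + 1) - B s = ∑ᵢ i S(s, i)`.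
-/

/-- Stirling numbers of the second kind. -/
def stirling : ℕ → ℕ → ℕ
  | 0, 0 => 1
  | 0, _ + 1 => 0
  | _ + 1, 0 => 0
  | n + 1, k + 1 => (k + 1) * stirling n (k + 1) + stirling n k

/-- The number of fixed points of a permutation of `Fin n`. -/
def fixCount {n : ℕ} (σ : Equiv.Perm (Fin n)) : ℕ :=
  (Finset.univ.filter fun x => σ x = x).card

open Finset Nat MulAction Equiv

theorem stirling_eq_stirlingSecond : ∀ s i : ℕ, stirling s i = stirlingSecond s i
  | 0, 0 | 0, _ + 1 | _ + 1, 0 => rfl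
  | s + 1, i + 1 => by
    rw [stirling, stirlingSecond_succ_succ, stirling_eq_stirlingSecond s (i + 1),
      stirling_eq_stirlingSecond s i]

theorem Nat.mul_descFactorial_eq (x i : ℕ) :
    x * x.descFactorial i = x.descFactorial (i + 1) + i * x.descFactorial i := by
  rcases le_or_gt i x with h | h
  · rw [descFactorial_succ, ← add_mul, Nat.sub_add_cancel h]
  · simp [descFactorial_of_lt h]

theorem Nat.pow_eq_sum_stirlingSecond_mul_descFactorial (x k : ℕ) :
    x ^ k = ∑ i ∈ range (k + 1), stirlingSecond k i * x.descFactorial i := by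
  induction k with
  | zero => simp
  | succ k ih =>
    have shift : ∑ i ∈ range (k + 1), i * stirlingSecond k i * x.descFactorial i
        = ∑ i ∈ range (k + 1), (i + 1) * stirlingSecond k (i + 1) * x.descFactorial (i + 1) := by
      rw [sum_range_succ', sum_range_succ, stirlingSecond_eq_zero_of_lt (lt_add_one k)]
      simp
    calc x ^ (k + 1) = ∑ i ∈ range (k + 1), stirlingSecond k i * (x * x.descFactorial i) := by
          rw [pow_succ, ih, sum_mul]
          exact sum_congr rfl fun i _ => by ring
      _ = ∑ i ∈ range (k + 1), stirlingSecond k i * x.descFactorial (i + 1)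
            + ∑ i ∈ range (k + 1), i * stirlingSecond k i * x.descFactorial i := by
          rw [← sum_add_distrib]
          exact sum_congr rfl fun i _ => by rw [mul_descFactorial_eq]; ring
      _ = ∑ i ∈ range (k + 2), stirlingSecond (k + 1) i * x.descFactorial i := by
          rw [shift, ← sum_add_distrib, sum_range_succ' _ (k + 1)]
          simp only [stirlingSecond_succ_succ, stirlingSecond_succ_zero, zero_mul, add_zero]
          exact sum_congr rfl fun i _ => by ring

theorem Nat.sum_range_stirlingSecond_succ (s : ℕ) :
    ∑ i ∈ range (s + 2), stirlingSecond (s + 1) i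
      = ∑ i ∈ range (s + 1), stirlingSecond s i + ∑ i ∈ range (s + 1), i * stirlingSecond s i := by
  have shift : ∑ i ∈ range (s + 1), (i + 1) * stirlingSecond s (i + 1)
      = ∑ i ∈ range (s + 1), i * stirlingSecond s i := by
    rw [sum_range_succ, stirlingSecond_eq_zero_of_lt (lt_add_one s), sum_range_succ' _ s]
    simp
  rw [sum_range_succ', stirlingSecond_succ_zero, add_zero]
  simp only [stirlingSecond_succ_succ, sum_add_distrib, shift]
  rw [add_comm]

section FixedPoints

variable {α : Type*} [Fintype α] [DecidableEq α]

theorem card_fixedBy_embedding_eq_descFactorial (σ : Perm α) (i : ℕ) :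
    Nat.card (fixedBy (Fin i ↪ α) σ) = (#{x | σ x = x}).descFactorial i := by
  have e : fixedBy (Fin i ↪ α) σ ≃ (Fin i ↪ {x // σ x = x}) :=
    (subtypeEquivRight fun f => by
      simp [Function.Embedding.ext_iff, Function.Embedding.smul_apply]).trans
      (codRestrict (Fin i) {x | σ x = x})
  rw [Nat.card_congr e, Nat.card_eq_fintype_card, Fintype.card_embedding_eq, Fintype.card_fin,
    Fintype.card_subtype]

theorem sum_descFactorial_card_fixedPoints {i : ℕ} (hi : i ≤ Fintype.card α) :
    ∑ σ : Perm α, (#{x | σ x = x}).descFactorial i = (Fintype.card α)! := by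
  have : Nonempty (Fin i ↪ α) := Function.Embedding.nonempty_of_card_le (by simpa using hi)
  obtain ⟨_⟩ := (pretransitive_iff_unique_quotient_of_nonempty (Perm α) (Fin i ↪ α)).mp
    (Perm.isMultiplyPretransitive α i)
  simp_rw [← card_fixedBy_embedding_eq_descFactorial, Nat.card_eq_fintype_card]
  rw [sum_card_fixedBy_eq_card_orbits_mul_card_group, Fintype.card_perm, Fintype.card_unique,
    one_mul]

theorem sum_card_fixedPoints_pow {k : ℕ} (hk : k ≤ Fintype.card α) :
    ∑ σ : Perm α, #{x | σ x = x} ^ k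
      = (Fintype.card α)! * ∑ i ∈ range (k + 1), stirlingSecond k i := by
  simp_rw [pow_eq_sum_stirlingSecond_mul_descFactorial, sum_comm (s := univ), ← mul_sum]
  rw [mul_sum]
  refine sum_congr rfl fun i hi => ?_
  rw [sum_descFactorial_card_fixedPoints ((le_of_lt_succ (mem_range.mp hi)).trans hk), mul_comm]

end FixedPoints

theorem sum_fixCount_pow {n k : ℕ} (hk : k ≤ n) :
    ∑ σ : Perm (Fin n), (fixCount σ : ℤ) ^ k
      = n ! * ∑ i ∈ range (k + 1), (stirlingSecond k i : ℤ) := by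
  have := sum_card_fixedPoints_pow (α := Fin n) (by simpa using hk)
  rw [Fintype.card_fin] at this
  exact_mod_cast this

theorem sum_range_succ_eq_sum_Icc_one {M : Type*} [AddCommMonoid M] (g : ℕ → M) (h0 : g 0 = 0)
    (s : ℕ) : ∑ i ∈ range (s + 1), g i = ∑ i ∈ Icc 1 s, g i := by
  rw [range_eq_Ico, sum_eq_sum_Ico_succ_bot (succ_pos s), h0, zero_add,
    ← Ico_add_one_right_eq_Icc]
  rfl

-- Both sides are `Δ^[r + 1] f 0 = Δ^[r] (Δ f) 0`.
theorem sum_signed_choose_succ_smul {G : Type*} [AddCommGroup G] (f : ℕ → G) (r : ℕ) :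
    ∑ k ∈ range (r + 2), ((-1 : ℤ) ^ (r + 1 - k) * (r + 1).choose k) • f k
      = ∑ s ∈ range (r + 1), ((-1 : ℤ) ^ (r - s) * r.choose s) • (f (s + 1) - f s) := by
  have h := fwdDiff_iter_eq_sum_shift 1 f (r + 1) 0
  rw [Function.iterate_succ_apply, fwdDiff_iter_eq_sum_shift] at h
  simpa [fwdDiff] using h.symm

theorem sub_one_pow_eq_sum {R : Type*} [CommRing R] (x : R) (n : ℕ) :
    (x - 1) ^ n = ∑ k ∈ range (n + 1), ((-1 : ℤ) ^ (n - k) * n.choose k) • x ^ k := by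
  rw [sub_eq_add_neg, add_pow]
  refine sum_congr rfl fun k _ => ?_
  push_cast [zsmul_eq_mul]
  ring

theorem multiplicity_standard_in_standard_tensor_power_general (n r : ℕ) (hn : 2 ≤ n)
    (hrn : r ≤ n - 1) :
    ∑ σ : Equiv.Perm (Fin n), ((fixCount σ : ℤ) - 1) ^ (r + 1) =
      (Nat.factorial n : ℤ) *
        ∑ s ∈ Finset.Icc 1 r, (-1 : ℤ) ^ (r - s) * (Nat.choose r s : ℤ) *
          ∑ i ∈ Finset.Icc 1 s, (i : ℤ) * (stirling s i : ℤ) := by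
  set B : ℕ → ℤ := fun k => ∑ i ∈ range (k + 1), (stirlingSecond k i : ℤ) with hB
  have succ_sub (s : ℕ) : B (s + 1) - B s = ∑ i ∈ Icc 1 s, (i : ℤ) * (stirling s i : ℤ) := by
    rw [← sum_range_succ_eq_sum_Icc_one _ (by simp), sub_eq_iff_eq_add', hB]
    simp only [stirling_eq_stirlingSecond]
    exact_mod_cast sum_range_stirlingSecond_succ s
  calc ∑ σ : Perm (Fin n), ((fixCount σ : ℤ) - 1) ^ (r + 1)
      = ∑ k ∈ range (r + 2), ((-1 : ℤ) ^ (r + 1 - k) * (r + 1).choose k) •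
          ∑ σ : Perm (Fin n), (fixCount σ : ℤ) ^ k := by
        simp_rw [sub_one_pow_eq_sum, smul_sum]
        exact sum_comm
    _ = n ! * ∑ k ∈ range (r + 2), ((-1 : ℤ) ^ (r + 1 - k) * (r + 1).choose k) • B k := by
        rw [mul_sum]
        refine sum_congr rfl fun k hk => ?_
        rw [sum_fixCount_pow (by simp at hk; omega), mul_smul_comm]
    _ = n ! * ∑ s ∈ range (r + 1), ((-1 : ℤ) ^ (r - s) * r.choose s) • (B (s + 1) - B s) := by
        rw [sum_signed_choose_succ_smul]
    _ = _ := by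
        rw [sum_range_succ_eq_sum_Icc_one _ (by simp [hB, sum_range_succ, stirlingSecond_self])]
        simp_rw [succ_sub, smul_eq_mul]

theorem multiplicity_standard_in_standard_tensor_power (n r : ℕ) (hn : 2 ≤ n)
    (hr1 : 1 ≤ r) (hrn : r ≤ n - 1) :
    ∑ σ : Equiv.Perm (Fin n), ((fixCount σ : ℤ) - 1) ^ (r + 1) =
      (Nat.factorial n : ℤ) *
        ∑ s ∈ Finset.Icc 1 r, (-1 : ℤ) ^ (r - s) * (Nat.choose r s : ℤ) *
          ∑ i ∈ Finset.Icc 1 s, (i : ℤ) * (stirling s i : ℤ) :=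
  multiplicity_standard_in_standard_tensor_power_general n r hn hrn
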